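/- arXiv:2301.09752 — 2 statements merged into one kernel-verified Lean document; each statement's English description precedes it below -/
import Mathlib

section
/- Let c, d be rationals in (0,1) with c + d < 1, let f be the bijective two-interval PAM determined by c and d (viewed as a map ℝ → ℝ), let α = (1−c−d)/(c·d), h(x) = Real.log (α·x + 1) / Real.log (α + 1), and τ = h(d). Then for every natural number n ≥ 1 and every real γ with 0 < γ < 1: n · f^[n] 0 < γ if and only if Int.fract (n·τ) < h (γ/n). -/
/-!
With `α c d = 1 - c - d`, the map `h` conjugates `f` on `[0,1)` to the rotation by `τ = h(d)`:
one has `α f(x) + 1 = (α x + 1)(α d + 1)` on `[0,c)` and `(α + 1)(α f(x) + 1) = (α x + 1)(α d + 1)`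
on `[c,1)`, so taking logarithms gives `h(f x) = {h x + τ}`. Hence `h(fⁿ 0) = {n τ}`, and since `h`
is strictly increasing, `n fⁿ(0) < γ ↔ fⁿ(0) < γ / n ↔ {n τ} < h(γ / n)`.
-/

/-- The bijective two-interval PAM determined by `c, d ∈ (0,1)`, as a map `ℝ → ℝ`:
it sends `[0,c)` onto `[d,1)` and `[c,1)` onto `[0,d)`. -/
noncomputable def bpamR (c d : ℝ) (x : ℝ) : ℝ :=
  if 0 ≤ x ∧ x < c then (1 - d) / c * x + d
  else if c ≤ x ∧ x < 1 then d / (1 - c) * x - c * d / (1 - c)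
  else 0

/-- The conjugating homeomorphism `h(x) = log (α x + 1) / log (α + 1)`. -/
noncomputable def hFun (α x : ℝ) : ℝ := Real.log (α * x + 1) / Real.log (α + 1)

open Set

section hFun

variable {α : ℝ}

lemma hFun_zero : hFun α 0 = 0 := by simp [hFun]

lemma hFun_one (hα : 0 < α) : hFun α 1 = 1 := by
  simp [hFun, div_self (Real.log_pos (by linarith : 1 < α + 1)).ne']

lemma hFun_strictMonoOn (hα : 0 < α) : StrictMonoOn (hFun α) (Ici 0) := by
  intro x hx y _ hxy
  have hx' : 0 < α * x + 1 := by nlinarith [mem_Ici.1 hx]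
  exact div_lt_div_of_pos_right (Real.log_lt_log hx' (by nlinarith))
    (Real.log_pos (by linarith))

lemma hFun_mapsTo_Ico (hα : 0 < α) : MapsTo (hFun α) (Ico 0 1) (Ico 0 1) := by
  intro x ⟨hx0, hx1⟩
  have hmono := hFun_strictMonoOn hα
  constructor
  · simpa [hFun_zero] using hmono.monotoneOn (mem_Ici.2 le_rfl) (mem_Ici.2 hx0) hx0
  · simpa [hFun_one hα] using hmono (mem_Ici.2 hx0) (mem_Ici.2 zero_le_one) hx1

lemma hFun_add_hFun_of_mul_eq {w x y z : ℝ} (hw : α * w + 1 ≠ 0) (hz : α * z + 1 ≠ 0)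
    (hx : α * x + 1 ≠ 0) (hy : α * y + 1 ≠ 0)
    (h : (α * w + 1) * (α * z + 1) = (α * x + 1) * (α * y + 1)) :
    hFun α w + hFun α z = hFun α x + hFun α y := by
  have hlog := congrArg Real.log h
  rw [Real.log_mul hw hz, Real.log_mul hx hy] at hlog
  simp only [hFun, ← add_div, hlog]

end hFun

section bpamR

variable {c d x : ℝ}

lemma bpamR_of_lt (hx0 : 0 ≤ x) (hxc : x < c) : bpamR c d x = (1 - d) / c * x + d := by
  simp [bpamR, hx0, hxc]

lemma bpamR_of_ge (hcx : c ≤ x) (hx1 : x < 1) : bpamR c d x = d * (x - c) / (1 - c) := by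
  simp only [bpamR, not_lt.2 hcx, and_false, if_false, hcx, hx1, and_self, if_true]
  ring

lemma bpamR_mapsTo_Ico (hc : 0 < c) (hd : 0 < d) (hcd : c + d < 1) :
    MapsTo (bpamR c d) (Ico 0 1) (Ico 0 1) := by
  intro x ⟨hx0, hx1⟩
  rcases lt_or_ge x c with hxc | hcx
  · rw [bpamR_of_lt hx0 hxc]
    have hslope : 0 < (1 - d) / c := div_pos (by linarith) hc
    have hlt : (1 - d) / c * x < (1 - d) / c * c := mul_lt_mul_of_pos_left hxc hslope
    rw [div_mul_cancel₀ _ hc.ne'] at hlt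
    exact ⟨by positivity, by linarith⟩
  · rw [bpamR_of_ge hcx hx1]
    have h1c : 0 < 1 - c := by linarith
    refine ⟨div_nonneg (mul_nonneg hd.le (by linarith)) h1c.le, ?_⟩
    rw [div_lt_one h1c]
    nlinarith

lemma hFun_bpamR {α : ℝ} (hc : 0 < c) (hd : 0 < d) (hcd : c + d < 1)
    (hαcd : α * (c * d) = 1 - c - d) (hx : x ∈ Ico 0 1) :
    hFun α (bpamR c d x) = Int.fract (hFun α x + hFun α d) := by
  have hα : 0 < α := by
    rw [eq_div_of_mul_eq (by positivity) hαcd]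
    exact div_pos (by linarith) (by positivity)
  have hfx := bpamR_mapsTo_Ico hc hd hcd hx
  have hpos {y : ℝ} (hy : 0 ≤ y) : α * y + 1 ≠ 0 := by positivity
  rw [eq_comm, Int.fract_eq_iff]
  refine ⟨(hFun_mapsTo_Ico hα hfx).1, (hFun_mapsTo_Ico hα hfx).2, ?_⟩
  rcases lt_or_ge x c with hxc | hcx
  · have hsum := hFun_add_hFun_of_mul_eq (hpos le_rfl) (hpos hfx.1) (hpos hx.1) (hpos hd.le)
      (by rw [bpamR_of_lt hx.1 hxc]; field_simp; linear_combination (-α * x) * hαcd)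
    refine ⟨0, ?_⟩
    rw [hFun_zero] at hsum
    push_cast
    linarith
  · have hsum := hFun_add_hFun_of_mul_eq (hpos zero_le_one) (hpos hfx.1) (hpos hx.1)
      (hpos hd.le)
      (by
        rw [bpamR_of_ge hcx hx.2]
        have : 1 - c ≠ 0 := by linarith
        field_simp
        linear_combination α * (x - 1) * hαcd)
    refine ⟨1, ?_⟩
    rw [hFun_one hα] at hsum
    push_cast
    linarith

lemma hFun_iterate_bpamR_zero {α : ℝ} (hc : 0 < c) (hd : 0 < d) (hcd : c + d < 1)
    (hαcd : α * (c * d) = 1 - c - d) (n : ℕ) :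
    hFun α ((bpamR c d)^[n] 0) = Int.fract (n * hFun α d) := by
  induction n with
  | zero => simp [hFun_zero]
  | succ n ih =>
    rw [Function.iterate_succ_apply',
      hFun_bpamR hc hd hcd hαcd ((bpamR_mapsTo_Ico hc hd hcd).iterate n ⟨le_rfl, one_pos⟩), ih]
    have hshift : Int.fract (n * hFun α d) + hFun α d = (n + 1 : ℕ) * hFun α d - ⌊n * hFun α d⌋ := by
      rw [Int.fract]
      push_cast
      ring
    rw [hshift, Int.fract_sub_intCast]

end bpamR

theorem bpam_shrinking_interval_iff_general (c d : ℚ)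
    (hc0 : 0 < c) (hd0 : 0 < d)
    (hcd : c + d < 1) :
    ∀ n : ℕ, 1 ≤ n → ∀ γ : ℝ, 0 < γ → γ < 1 →
      ((n : ℝ) * (bpamR (c : ℝ) (d : ℝ))^[n] 0 < γ ↔
        Int.fract ((n : ℝ) * hFun ((1 - c - d) / (c * d) : ℝ) (d : ℝ)) <
          hFun ((1 - c - d) / (c * d) : ℝ) (γ / (n : ℝ))) := by
  intro n hn γ hγ _
  have hc : (0 : ℝ) < c := by exact_mod_cast hc0
  have hd : (0 : ℝ) < d := by exact_mod_cast hd0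
  have hcd' : (c : ℝ) + d < 1 := by exact_mod_cast hcd
  have hα : 0 < (1 - (c : ℝ) - d) / (c * d) := div_pos (by linarith) (by positivity)
  have hn0 : (0 : ℝ) < n := by exact_mod_cast hn
  rw [← hFun_iterate_bpamR_zero hc hd hcd' (div_mul_cancel₀ _ (by positivity)), ← lt_div_iff₀' hn0]
  exact ((hFun_strictMonoOn hα).lt_iff_lt
    ((bpamR_mapsTo_Ico hc hd hcd').iterate n ⟨le_rfl, one_pos⟩).1 (div_pos hγ hn0).le).symm

/-- The shrinking interval condition `n · fⁿ(0) < γ` translates, via the conjugacy `h`,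
to the inequality `{n τ} < h(γ/n)` about the rotation by `τ = h(d)`. -/
theorem bpam_shrinking_interval_iff (c d : ℚ)
    (hc0 : 0 < c) (hc1 : c < 1) (hd0 : 0 < d) (hd1 : d < 1)
    (hcd : c + d < 1) :
    ∀ n : ℕ, 1 ≤ n → ∀ γ : ℝ, 0 < γ → γ < 1 →
      ((n : ℝ) * (bpamR (c : ℝ) (d : ℝ))^[n] 0 < γ ↔
        Int.fract ((n : ℝ) * hFun ((1 - c - d) / (c * d) : ℝ) (d : ℝ)) <
          hFun ((1 - c - d) / (c * d) : ℝ) (γ / (n : ℝ))) :=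
  bpam_shrinking_interval_iff_general c d hc0 hd0 hcd
end

section
/- Let f : ℚ → ℚ be defined by f(x) = (4/3)·x if 0 ≤ x < 1/2, f(x) = (4/3)·x − 1/3 if 1/2 ≤ x < 1, and f(x) = 0 otherwise. Then for every n : ℕ, the 3-adic valuation strictly decreases along the orbit of 1/5: padicValRat 3 (f^[n+1] (1/5)) < padicValRat 3 (f^[n] (1/5)). -/
/-- The expanding two-interval PAM `f(x) = (4/3)x` on `[0,1/2)`,
`f(x) = (4/3)x - 1/3` on `[1/2,1)`, and `0` otherwise. -/
def fExp (x : ℚ) : ℚ :=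
  if 0 ≤ x ∧ x < 1 / 2 then 4 / 3 * x
  else if 1 / 2 ≤ x ∧ x < 1 then 4 / 3 * x - 1 / 3
  else 0

/-!
The orbit of `1/5` stays in `(0, 1)`, where `fExp x` is `4x/3` or `4x/3 - 1/3`. Multiplying by
`4/3` lowers the 3-adic valuation by one, and once `v₃(x) < 0` we have `v₃(4x/3) < -1 = v₃(1/3)`,
so by the ultrametric property subtracting `1/3` does not change it. The first step sends `1/5`
to `4/15`, so `v₃(fExp^[n] (1/5)) = -n`.
-/

open Set

lemma mapsTo_fExp_Ioo : MapsTo fExp (Ioo 0 1) (Ioo 0 1) := by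
  rintro x ⟨hx₀, hx₁⟩
  unfold fExp
  split_ifs with hlow hhigh
  · constructor <;> linarith
  · constructor <;> linarith
  · exact absurd ⟨le_of_not_gt (hlow ⟨hx₀.le, ·⟩), hx₁⟩ hhigh

lemma padicValRat_natCast_of_not_dvd {p n : ℕ} (h : ¬p ∣ n) : padicValRat p n = 0 := by
  simp [padicValNat.eq_zero_of_not_dvd h]

lemma padicValRat_three_self : padicValRat 3 3 = 1 := by
  simpa using padicValRat.self (p := 3) (by norm_num)

lemma padicValRat_three_four_div_three_mul {x : ℚ} (hx : x ≠ 0) :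
    padicValRat 3 (4 / 3 * x) = padicValRat 3 x - 1 := by
  have h4 := padicValRat_natCast_of_not_dvd (p := 3) (n := 4) (by norm_num)
  push_cast at h4
  rw [padicValRat.mul (by norm_num) hx, padicValRat.div (by norm_num) (by norm_num),
    padicValRat_three_self, h4]
  ring

lemma padicValRat_three_fExp {x : ℚ} (hx : x ∈ Ioo 0 1) (hv : padicValRat 3 x < 0) :
    padicValRat 3 (fExp x) = padicValRat 3 x - 1 := by
  obtain ⟨hx₀, hx₁⟩ := hx
  have hmul := padicValRat_three_four_div_three_mul hx₀.ne'
  unfold fExp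
  split_ifs with hlow hhigh
  · exact hmul
  · have hthird : padicValRat 3 (-(1 / 3)) = -1 := by simp [padicValRat_three_self]
    rw [sub_eq_add_neg, padicValRat.add_eq_of_lt (by linarith) (by positivity) (by norm_num)
      (by omega), hmul]
  · exact absurd ⟨le_of_not_gt (hlow ⟨hx₀.le, ·⟩), hx₁⟩ hhigh

lemma padicValRat_three_fExp_iterate {x : ℚ} (hx : x ∈ Ioo 0 1) (hv : padicValRat 3 x < 0)
    (n : ℕ) : padicValRat 3 (fExp^[n] x) = padicValRat 3 x - n := by
  induction n with
  | zero => simp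
  | succ n ih =>
    rw [Function.iterate_succ_apply', padicValRat_three_fExp (mapsTo_fExp_Ioo.iterate n hx)
      (by omega), ih]
    push_cast
    ring

lemma padicValRat_three_fExp_iterate_one_div_five (n : ℕ) :
    padicValRat 3 (fExp^[n] (1 / 5)) = -n := by
  have h5 := padicValRat_natCast_of_not_dvd (p := 3) (n := 5) (by norm_num)
  push_cast at h5
  cases n with
  | zero => simp [h5]
  | succ n =>
    have hstart : fExp (1 / 5) = 4 / 3 * (1 / 5) := if_pos (by norm_num)
    have hv : padicValRat 3 (fExp (1 / 5)) = -1 := by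
      rw [hstart, padicValRat_three_four_div_three_mul (by norm_num)]
      simp [h5]
    rw [Function.iterate_succ_apply, padicValRat_three_fExp_iterate
      (mapsTo_fExp_Ioo ⟨by norm_num, by norm_num⟩) (by omega), hv]
    push_cast
    ring

/-- The 3-adic valuation strictly decreases along the orbit of `1/5` under `fExp`. -/
theorem fExp_padicValRat_strict_anti (n : ℕ) :
    padicValRat 3 (fExp^[n + 1] (1 / 5)) < padicValRat 3 (fExp^[n] (1 / 5)) := by
  rw [padicValRat_three_fExp_iterate_one_div_five, padicValRat_three_fExp_iterate_one_div_five]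
  push_cast
  omega
end
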